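/- arXiv:1505.00653 — 2 statements merged into one kernel-verified Lean document; each statement's English description precedes it below -/
import Mathlib

section
/- In a simply-laced irreducible root system, the depth of any positive root γ (the minimal length of w ∈ W with w(γ) ∈ −Δ⁺) equals the height ht(γ) = Σ c_α, where γ = Σ_{α∈Π} c_α α. -/
open scoped RealInnerProductSpace

/-- Data of a crystallographic root system in a real inner product space `V`,
with simple roots indexed by a finite type `ι`. -/
structure RSD (ι V : Type*) [Fintype ι] [NormedAddCommGroup V]
    [InnerProductSpace ℝ V] where
  /-- The simple roots. -/
  sroot : ι → V
  /-- The set of roots. -/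
  Δ : Set V
  finite : Δ.Finite
  zero_not_mem : (0 : V) ∉ Δ
  sroot_mem : ∀ i, sroot i ∈ Δ
  sroot_indep : LinearIndependent ℝ sroot
  neg_mem : ∀ a ∈ Δ, -a ∈ Δ
  /-- Crystallographic condition. -/
  crys : ∀ a ∈ Δ, ∀ b ∈ Δ, ∃ n : ℤ, 2 * ⟪a, b⟫ / ⟪a, a⟫ = (n : ℝ)
  /-- The reflection associated with a vector (only specified on roots). -/
  reflect : V → (V ≃ₗ[ℝ] V)
  reflect_apply : ∀ a ∈ Δ, ∀ v : V,
    reflect a v = v - (2 * ⟪a, v⟫ / ⟪a, a⟫) • a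
  reflect_root_mem : ∀ a ∈ Δ, ∀ b ∈ Δ, reflect a b ∈ Δ
  /-- Every root is a nonnegative or nonpositive integral combination of simple roots. -/
  decomp : ∀ a ∈ Δ, (∃ c : ι → ℕ, a = ∑ i, (c i : ℝ) • sroot i) ∨
      (∃ c : ι → ℕ, a = -∑ i, (c i : ℝ) • sroot i)
  /-- Irreducibility. -/
  irred : ∀ S T : Set V, S ∪ T = Δ → (∀ a ∈ S, ∀ b ∈ T, ⟪a, b⟫ = 0) →
      S = ∅ ∨ T = ∅

namespace RSD

variable {ι V : Type*} [Fintype ι] [NormedAddCommGroup V] [InnerProductSpace ℝ V]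
  (R : RSD ι V)

/-- The set of positive roots. -/
def pos : Set V := {a ∈ R.Δ | ∃ c : ι → ℕ, a = ∑ i, (c i : ℝ) • R.sroot i}

/-- `R.le μ γ` means `μ ≼ γ`, i.e. `γ - μ` is a nonnegative integral combination
of simple roots. -/
def le (μ γ : V) : Prop := ∃ c : ι → ℕ, γ - μ = ∑ i, (c i : ℝ) • R.sroot i

/-- The Weyl group, generated by the simple reflections. -/
def W : Subgroup (V ≃ₗ[ℝ] V) :=
  Subgroup.closure (Set.range fun i => R.reflect (R.sroot i))

/-- The inversion set `N(w) = {γ ∈ Δ⁺ ∣ w γ ∈ -Δ⁺}`. -/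
def N (w : V ≃ₗ[ℝ] V) : Set V := {γ ∈ R.pos | -(w γ) ∈ R.pos}

/-- The length of `w`: minimal length of an expression of `w` as a product of
simple reflections. -/
noncomputable def len (w : V ≃ₗ[ℝ] V) : ℕ :=
  sInf {n | ∃ l : List ι, l.length = n ∧
    (l.map fun i => R.reflect (R.sroot i)).prod = w}

/-- The coroot `a∨ = 2a/(a,a)`. -/
@[nolint unusedArguments]
noncomputable def coroot (_R : RSD ι V) (a : V) : V := (2 / ⟪a, a⟫) • a

/-- `ρ`, the half-sum of the positive roots. -/
noncomputable def rho : V :=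
  (2⁻¹ : ℝ) • ∑ a ∈ (R.finite.subset (fun a ha => ha.1 : R.pos ⊆ R.Δ)).toFinset, a

/-- `R.HtIs γ n` : the height of `γ` is `n`. -/
def HtIs (γ : V) (n : ℕ) : Prop :=
  ∃ c : ι → ℕ, γ = ∑ i, (c i : ℝ) • R.sroot i ∧ ∑ i, c i = n

/-- A long root: a root of maximal squared length. -/
def IsLong (γ : V) : Prop := γ ∈ R.Δ ∧ ∀ b ∈ R.Δ, ⟪b, b⟫ ≤ ⟪γ, γ⟫

/-- The highest root. -/
def IsHighest (θ : V) : Prop := θ ∈ R.pos ∧ ∀ γ ∈ R.pos, R.le γ θ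

/-- Simply-laced: all roots have the same length. -/
def SimplyLaced : Prop := ∀ a ∈ R.Δ, ∀ b ∈ R.Δ, ⟪a, a⟫ = ⟪b, b⟫

/-- A minimal inversion complete set. -/
def IsMICS (F : Set (V ≃ₗ[ℝ] V)) : Prop :=
  (∀ w ∈ F, w ∈ R.W) ∧ (⋃ w ∈ F, R.N w) = R.pos ∧
    ∀ F' ⊂ F, (⋃ w ∈ F', R.N w) ≠ R.pos

end RSD

/-!
In a simply-laced system the pairing `2⟪α, β⟫/⟪α, α⟫` of two roots `β ≠ ±α` lies in
`{-1, 0, 1}` (strict Cauchy–Schwarz plus integrality). Hence a simple reflection `s_j` sends a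
positive root `β ≠ α_j` to the positive root `β - ⟨β, α_j^∨⟩ α_j`, whose height differs from that
of `β` by at most one, and a positive root can only become negative through `s_j α_j = -α_j`.
So a word sending `γ` to a negative root has length at least `ht γ`. Conversely `⟪γ, γ⟫ > 0`
forces `⟪α_j, γ⟫ > 0` for some `j`, and then `s_j γ = γ - α_j` has height `ht γ - 1`; iterating
reaches a simple root, which one more reflection makes negative.
-/

theorem abs_real_inner_lt_inner_self_of_norm_eq {F : Type*} [NormedAddCommGroup F]
    [InnerProductSpace ℝ F] {a b : F} (hnorm : ‖a‖ = ‖b‖) (hba : b ≠ a) (hba' : b ≠ -a) :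
    |⟪a, b⟫| < ⟪a, a⟫ := by
  have hb : ‖b‖ ≠ 0 := fun h => hba (by rw [norm_eq_zero.1 h, norm_eq_zero.1 (hnorm.trans h)])
  have hlt : ∀ c : F, ‖c‖ = ‖b‖ → c ≠ a → ⟪a, c⟫ < ‖b‖ * ‖b‖ := fun c hc hca => by
    rw [show ‖b‖ * ‖b‖ = ‖a‖ * ‖c‖ by rw [hc, hnorm], inner_lt_norm_mul_iff_real, hnorm, hc]
    exact fun h => hca (smul_right_injective F hb h).symm
  have hpos := hlt b rfl hba
  have hneg := hlt (-b) (norm_neg b) (fun h => hba' (neg_eq_iff_eq_neg.1 h))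
  rw [inner_neg_right] at hneg
  rw [real_inner_self_eq_norm_mul_norm, hnorm, abs_lt]
  constructor <;> linarith

namespace RSD

variable {ι V : Type*} [Fintype ι] [NormedAddCommGroup V] [InnerProductSpace ℝ V]
  {R : RSD ι V} {x y β γ : V} {k m n : ℕ}

theorem inner_self_pos_of_mem (hx : x ∈ R.Δ) : 0 < ⟪x, x⟫ :=
  real_inner_self_pos.2 fun h => R.zero_not_mem (h ▸ hx)

theorem HtIs.cast_eq_sum (h : R.HtIs x n) {f : ι → ℝ} (hf : x = ∑ i, f i • R.sroot i) :
    (n : ℝ) = ∑ i, f i := by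
  obtain ⟨c, hc, rfl⟩ := h
  have hcf := Fintype.linearIndependent_iff.1 R.sroot_indep (fun i => c i - f i)
    (by simp only [sub_smul, Finset.sum_sub_distrib, ← hc, ← hf, sub_self])
  push_cast
  exact Finset.sum_congr rfl fun i _ => sub_eq_zero.1 (hcf i)

theorem HtIs.unique (hm : R.HtIs x m) (hn : R.HtIs x n) : m = n := by
  obtain ⟨c, hc, rfl⟩ := hn
  exact_mod_cast hm.cast_eq_sum hc

theorem HtIs.smul_add_smul (hx : R.HtIs x n) (hy : R.HtIs y k) {s r : ℝ}
    (h : R.HtIs (s • x + r • y) m) : (m : ℝ) = s * n + r * k := by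
  obtain ⟨c, hc, rfl⟩ := hx
  obtain ⟨d, hd, rfl⟩ := hy
  rw [h.cast_eq_sum (f := fun i => s * c i + r * d i)
    (by simp only [add_smul, mul_smul, Finset.sum_add_distrib, ← Finset.smul_sum, ← hc, ← hd])]
  push_cast
  rw [Finset.sum_add_distrib, Finset.mul_sum, Finset.mul_sum]

theorem htIs_sroot (j : ι) : R.HtIs (R.sroot j) 1 := by
  classical
  exact ⟨Pi.single j 1, by simp [Pi.single_apply], by simp⟩

theorem sroot_mem_pos (j : ι) : R.sroot j ∈ R.pos := by
  obtain ⟨c, hc, -⟩ := R.htIs_sroot j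
  exact ⟨R.sroot_mem j, c, hc⟩

theorem exists_htIs (hx : x ∈ R.pos) : ∃ n, R.HtIs x n := by
  obtain ⟨-, c, hc⟩ := hx
  exact ⟨∑ i, c i, c, hc, rfl⟩

theorem HtIs.pos_of_mem_pos (h : R.HtIs x n) (hx : x ∈ R.pos) : 0 < n := by
  obtain ⟨c, hc, rfl⟩ := h
  refine Nat.pos_of_ne_zero fun h0 => R.zero_not_mem ?_
  have hc0 := Finset.sum_eq_zero_iff.1 h0
  convert hx.1
  simp [hc, hc0]

theorem neg_notMem_pos (hx : x ∈ R.pos) : -x ∉ R.pos := fun hnx => by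
  obtain ⟨n, hn⟩ := R.exists_htIs hx
  obtain ⟨m, hm⟩ := R.exists_htIs hnx
  have hmn := hn.smul_add_smul hn (s := -1) (r := 0) (by simpa using hm)
  have : (0 : ℝ) < n := by exact_mod_cast hn.pos_of_mem_pos hx
  have : (0 : ℝ) < m := by exact_mod_cast hm.pos_of_mem_pos hnx
  linarith

theorem mem_pos_or_neg_mem_pos (hx : x ∈ R.Δ) : x ∈ R.pos ∨ -x ∈ R.pos := by
  rcases R.decomp x hx with ⟨c, hc⟩ | ⟨c, hc⟩
  · exact Or.inl ⟨hx, c, hc⟩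
  · exact Or.inr ⟨R.neg_mem x hx, c, by rw [hc, neg_neg]⟩

theorem exists_inner_sroot_pos (hx : x ∈ R.pos) : ∃ j, 0 < ⟪R.sroot j, x⟫ := by
  obtain ⟨hΔ, c, hc⟩ := hx
  by_contra! h
  refine (inner_self_pos_of_mem hΔ).not_ge ?_
  nth_rw 1 [hc]
  rw [sum_inner]
  exact Finset.sum_nonpos fun i _ => by
    rw [real_inner_smul_left]
    exact mul_nonpos_of_nonneg_of_nonpos (Nat.cast_nonneg _) (h i)

theorem reflect_apply_self {a : V} (ha : a ∈ R.Δ) : R.reflect a a = -a := by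
  rw [R.reflect_apply a ha, mul_div_assoc, div_self (inner_self_pos_of_mem ha).ne']
  module

theorem reflect_reflect {a : V} (ha : a ∈ R.Δ) (v : V) : R.reflect a (R.reflect a v) = v := by
  have haa := (inner_self_pos_of_mem ha).ne'
  rw [R.reflect_apply a ha (R.reflect a v), R.reflect_apply a ha v, inner_sub_right,
    real_inner_smul_right]
  field_simp
  module

theorem HtIs.reflect_sroot {j : ι} (hn : R.HtIs β n) (hm : R.HtIs (R.reflect (R.sroot j) β) m) :
    (m : ℝ) = n - 2 * ⟪R.sroot j, β⟫ / ⟪R.sroot j, R.sroot j⟫ := by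
  rw [R.reflect_apply _ (R.sroot_mem j)] at hm
  have := hn.smul_add_smul (R.htIs_sroot j) (s := 1)
    (r := -(2 * ⟪R.sroot j, β⟫ / ⟪R.sroot j, R.sroot j⟫)) (by convert hm using 2; module)
  linarith

variable (R) in
def wordProd (l : List ι) : V ≃ₗ[ℝ] V := (l.map fun i => R.reflect (R.sroot i)).prod

theorem wordProd_append_singleton_apply (l : List ι) (j : ι) (v : V) :
    R.wordProd (l ++ [j]) v = R.wordProd l (R.reflect (R.sroot j) v) := by
  simp [wordProd, List.prod_append]

theorem wordProd_mem_W (l : List ι) : R.wordProd l ∈ R.W :=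
  Subgroup.list_prod_mem (K := R.W) fun _ hw => by
    obtain ⟨i, -, rfl⟩ := List.mem_map.1 hw
    exact Subgroup.subset_closure ⟨i, rfl⟩

theorem len_wordProd_le (l : List ι) : R.len (R.wordProd l) ≤ l.length :=
  Nat.sInf_le ⟨l, rfl, rfl⟩

theorem exists_wordProd_eq {w : V ≃ₗ[ℝ] V} (hw : w ∈ R.W) : ∃ l, R.wordProd l = w := by
  have hinv : ∀ i, (R.reflect (R.sroot i))⁻¹ = R.reflect (R.sroot i) := fun i =>
    inv_eq_of_mul_eq_one_right (LinearEquiv.ext (R.reflect_reflect (R.sroot_mem i)))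
  induction hw using Subgroup.closure_induction'' with
  | mem _ hx =>
    obtain ⟨i, rfl⟩ := hx
    exact ⟨[i], by simp [wordProd]⟩
  | inv_mem _ hx =>
    obtain ⟨i, rfl⟩ := hx
    exact ⟨[i], by simp [wordProd, hinv]⟩
  | one => exact ⟨[], rfl⟩
  | mul _ _ _ _ hx hy =>
    obtain ⟨lx, rfl⟩ := hx
    obtain ⟨ly, rfl⟩ := hy
    exact ⟨lx ++ ly, by simp [wordProd, List.prod_append]⟩

theorem exists_length_eq_len {w : V ≃ₗ[ℝ] V} (hw : w ∈ R.W) :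
    ∃ l : List ι, l.length = R.len w ∧ R.wordProd l = w := by
  obtain ⟨l, hl⟩ := R.exists_wordProd_eq hw
  exact Nat.sInf_mem (s := {k | ∃ l : List ι, l.length = k ∧ R.wordProd l = w}) ⟨_, l, rfl, hl⟩

namespace SimplyLaced

theorem abs_pairing_le_one (hsl : R.SimplyLaced) {a b : V} (ha : a ∈ R.Δ) (hb : b ∈ R.Δ)
    (hba : b ≠ a) (hba' : b ≠ -a) : |2 * ⟪a, b⟫ / ⟪a, a⟫| ≤ 1 := by
  have haa := inner_self_pos_of_mem ha
  have hnorm : ‖a‖ = ‖b‖ := by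
    have := hsl a ha b hb
    rw [real_inner_self_eq_norm_sq, real_inner_self_eq_norm_sq] at this
    exact (pow_left_inj₀ (norm_nonneg a) (norm_nonneg b) two_ne_zero).1 this
  have hlt : |2 * ⟪a, b⟫ / ⟪a, a⟫| < 2 := by
    rw [abs_div, abs_mul, abs_two, abs_of_pos haa, div_lt_iff₀ haa]
    linarith [abs_real_inner_lt_inner_self_of_norm_eq hnorm hba hba']
  obtain ⟨z, hz⟩ := R.crys a ha b hb
  rw [hz] at hlt ⊢
  have hz2 : |z| < 2 := by exact_mod_cast hlt
  have hz1 : |z| ≤ 1 := by rw [abs_lt] at hz2; rw [abs_le]; omega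
  exact_mod_cast hz1

theorem abs_pairing_sroot_le_one (hsl : R.SimplyLaced) {j : ι} (hβ : β ∈ R.pos)
    (hne : β ≠ R.sroot j) : |2 * ⟪R.sroot j, β⟫ / ⟪R.sroot j, R.sroot j⟫| ≤ 1 :=
  hsl.abs_pairing_le_one (R.sroot_mem j) hβ.1 hne
    fun h => R.neg_notMem_pos (R.sroot_mem_pos j) (h ▸ hβ)

theorem reflect_sroot_mem_pos (hsl : R.SimplyLaced) {j : ι} (hβ : β ∈ R.pos)
    (hne : β ≠ R.sroot j) : R.reflect (R.sroot j) β ∈ R.pos := by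
  refine (R.mem_pos_or_neg_mem_pos (R.reflect_root_mem _ (R.sroot_mem j) _ hβ.1)).resolve_right
    fun hneg => ?_
  obtain ⟨n, hn⟩ := R.exists_htIs hβ
  obtain ⟨m, hm⟩ := R.exists_htIs hneg
  have hm1 : (1 : ℝ) ≤ m := by exact_mod_cast hm.pos_of_mem_pos hneg
  rw [R.reflect_apply _ (R.sroot_mem j)] at hm
  -- a negative image would have height `⟨β, α_j^∨⟩ - ht β ≤ 1 - 1`
  have hmn := hn.smul_add_smul (R.htIs_sroot j) (s := -1)
    (r := 2 * ⟪R.sroot j, β⟫ / ⟪R.sroot j, R.sroot j⟫) (by convert hm using 2; module)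
  have hn1 : (1 : ℝ) ≤ n := by exact_mod_cast hn.pos_of_mem_pos hβ
  linarith [(abs_le.1 (hsl.abs_pairing_sroot_le_one hβ hne)).2]

theorem le_length_of_neg_mem_pos (hsl : R.SimplyLaced) (l : List ι) (hγ : γ ∈ R.pos)
    (hn : R.HtIs γ n) (hneg : -(R.wordProd l γ) ∈ R.pos) : n ≤ l.length := by
  induction l using List.reverseRecOn generalizing γ n with
  | nil => exact absurd hneg (R.neg_notMem_pos hγ)
  | append_singleton t j ih =>
    rw [wordProd_append_singleton_apply] at hneg
    rw [List.length_append, List.length_singleton]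
    by_cases hγj : γ = R.sroot j
    · have := hn.unique (hγj ▸ R.htIs_sroot j)
      omega
    · have hpos := hsl.reflect_sroot_mem_pos hγ hγj
      obtain ⟨m, hm⟩ := R.exists_htIs hpos
      have hmn := hn.reflect_sroot hm
      have hnm : (n : ℝ) ≤ m + 1 := by
        linarith [(abs_le.1 (hsl.abs_pairing_sroot_le_one hγ hγj)).2]
      have hm_le := ih hpos hm hneg
      have : n ≤ m + 1 := by exact_mod_cast hnm
      omega

theorem exists_length_eq_neg_mem_pos (hsl : R.SimplyLaced) (hγ : γ ∈ R.pos)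
    (hn : R.HtIs γ n) : ∃ l : List ι, l.length = n ∧ -(R.wordProd l γ) ∈ R.pos := by
  induction n generalizing γ with
  | zero => exact absurd (hn.pos_of_mem_pos hγ) (lt_irrefl 0)
  | succ n ih =>
    obtain ⟨j, hj⟩ := R.exists_inner_sroot_pos hγ
    by_cases hγj : γ = R.sroot j
    · subst hγj
      refine ⟨[j], by simp [hn.unique (R.htIs_sroot j)], ?_⟩
      simpa [wordProd, reflect_apply_self (R.sroot_mem j)] using R.sroot_mem_pos j
    · have hpos := hsl.reflect_sroot_mem_pos hγ hγj
      obtain ⟨m, hm⟩ := R.exists_htIs hpos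
      have hmn := hn.reflect_sroot hm
      push_cast at hmn
      have hp := (abs_le.1 (hsl.abs_pairing_sroot_le_one hγ hγj)).2
      have hp0 : 0 < 2 * ⟪R.sroot j, γ⟫ / ⟪R.sroot j, R.sroot j⟫ :=
        div_pos (by linarith) (inner_self_pos_of_mem (R.sroot_mem j))
      have hlt : m < n + 1 := by exact_mod_cast (show (m : ℝ) < n + 1 by linarith)
      have hle : n ≤ m := by exact_mod_cast (show (n : ℝ) ≤ m by linarith)
      obtain ⟨l, hl, hneg⟩ := ih hpos ((by omega : m = n) ▸ hm)
      exact ⟨l ++ [j], by simp [hl], by rwa [wordProd_append_singleton_apply]⟩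

theorem le_len_of_neg_mem_pos (hsl : R.SimplyLaced) (hγ : γ ∈ R.pos) (hn : R.HtIs γ n)
    {w : V ≃ₗ[ℝ] V} (hw : w ∈ R.W) (hneg : -(w γ) ∈ R.pos) : n ≤ R.len w := by
  obtain ⟨l, hl, rfl⟩ := R.exists_length_eq_len hw
  exact hl ▸ hsl.le_length_of_neg_mem_pos l hγ hn hneg

end SimplyLaced

end RSD

/-- In a simply-laced root system, the depth of a positive root
equals its height. -/
theorem depth_eq_height
    {ι V : Type*} [Fintype ι] [NormedAddCommGroup V] [InnerProductSpace ℝ V]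
    (R : RSD ι V) (hsl : R.SimplyLaced) (γ : V) (hγ : γ ∈ R.pos)
    (n : ℕ) (hht : R.HtIs γ n) :
    sInf {m : ℕ | ∃ w ∈ R.W, -(w γ) ∈ R.pos ∧ R.len w = m} = n := by
  obtain ⟨l, hl, hneg⟩ := hsl.exists_length_eq_neg_mem_pos hγ hht
  have hlen : R.len (R.wordProd l) = n :=
    le_antisymm (hl ▸ R.len_wordProd_le l)
      (hsl.le_len_of_neg_mem_pos hγ hht (R.wordProd_mem_W l) hneg)
  refine IsLeast.csInf_eq ⟨⟨R.wordProd l, R.wordProd_mem_W l, hneg, hlen⟩, ?_⟩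
  rintro m ⟨w, hw, hwneg, rfl⟩
  exact hsl.le_len_of_neg_mem_pos hγ hht hw hwneg
end

section
/- For any long positive root μ, the inversion set N(w_{θ,μ}) of the minimal-length element taking θ to μ is contained in H ∖ {θ}, where H = {γ ∈ Δ⁺ | (γ,θ) ≠ 0}. -/
open scoped RealInnerProductSpace

/-
If `γ ∈ N(w)`, the exchange condition writes `w s_γ` as a word one letter shorter than a reduced
word for `w`. When `(γ, θ) = 0` the reflection `s_γ` fixes `θ`, so `w s_γ` would be a shorter
element still taking `θ` to `μ`; and `θ ∉ N(w)` because `w θ = μ` is positive.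
-/

namespace RSD

variable {ι V : Type*} [Fintype ι] [NormedAddCommGroup V] [InnerProductSpace ℝ V]
  (R : RSD ι V)

lemma ne_zero_of_mem {a : V} (ha : a ∈ R.Δ) : a ≠ 0 := fun h => R.zero_not_mem (h ▸ ha)

lemma inner_self_ne_zero_of_mem {a : V} (ha : a ∈ R.Δ) : ⟪a, a⟫ ≠ 0 :=
  inner_self_ne_zero.2 (R.ne_zero_of_mem ha)

lemma inner_reflect_reflect {a : V} (ha : a ∈ R.Δ) (x y : V) :
    ⟪R.reflect a x, R.reflect a y⟫ = ⟪x, y⟫ := by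
  have := R.inner_self_ne_zero_of_mem ha
  simp only [R.reflect_apply a ha, inner_sub_left, inner_sub_right, real_inner_smul_left,
    real_inner_smul_right, real_inner_comm x a]
  field_simp
  ring

lemma reflect_mul_self {a : V} (ha : a ∈ R.Δ) : R.reflect a * R.reflect a = 1 := by
  ext v
  have := R.inner_self_ne_zero_of_mem ha
  simp only [LinearEquiv.mul_apply, R.reflect_apply a ha, inner_sub_right, real_inner_smul_right,
    LinearEquiv.coe_one, id_eq]
  field_simp
  module

lemma reflect_apply_eq_self {a v : V} (ha : a ∈ R.Δ) (hav : ⟪a, v⟫ = 0) :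
    R.reflect a v = v := by
  simp [R.reflect_apply a ha, hav]

lemma reflect_smul {a : V} {c : ℝ} (ha : a ∈ R.Δ) (hc : c ≠ 0) (hca : c • a ∈ R.Δ) :
    R.reflect (c • a) = R.reflect a := by
  ext v
  have := R.inner_self_ne_zero_of_mem ha
  rw [R.reflect_apply _ hca, R.reflect_apply a ha, real_inner_smul_left, real_inner_smul_left,
    real_inner_smul_right, smul_smul]
  congr 2
  field_simp

lemma reflect_conj {g : V ≃ₗ[ℝ] V} (hg : ∀ x y, ⟪g x, g y⟫ = ⟪x, y⟫) {a : V} (ha : a ∈ R.Δ)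
    (hga : g a ∈ R.Δ) : R.reflect (g a) = g * R.reflect a * g⁻¹ := by
  ext v
  obtain ⟨u, rfl⟩ := g.surjective v
  have hu : g⁻¹ (g u) = u := g.symm_apply_apply u
  simp only [LinearEquiv.mul_apply, hu, R.reflect_apply _ hga, R.reflect_apply a ha, hg,
    map_sub, map_smul]

lemma coeff_eq_zero_of_sum_add_eq_sum {d c : ι → ℕ} {f : ι → ℝ}
    (h : ∑ j, ((d j : ℝ) + c j) • R.sroot j = ∑ j, f j • R.sroot j) {j : ι} (hj : f j = 0) :
    d j = 0 := by
  have := Fintype.linearIndependent_iffₛ.1 R.sroot_indep _ _ h j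
  rw [hj] at this
  exact_mod_cast (add_eq_zero.1 (by exact_mod_cast this : d j + c j = 0)).1

lemma neg_notMem_pos_s12 {γ : V} (hγ : γ ∈ R.pos) : -γ ∉ R.pos := by
  rintro ⟨-, c, hc⟩
  obtain ⟨hγΔ, d, rfl⟩ := hγ
  have hsum : ∑ j, ((d j : ℝ) + c j) • R.sroot j = ∑ j, (0 : ℝ) • R.sroot j := by
    simp only [add_smul, Finset.sum_add_distrib, ← hc, zero_smul, Finset.sum_const_zero]
    abel
  refine R.ne_zero_of_mem hγΔ (Finset.sum_eq_zero fun j _ => ?_)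
  simp [R.coeff_eq_zero_of_sum_add_eq_sum hsum rfl]

lemma eq_smul_sroot_of_mem_N_reflect {β : V} {i : ι} (hβ : β ∈ R.N (R.reflect (R.sroot i))) :
    ∃ c : ℝ, c ≠ 0 ∧ β = c • R.sroot i := by
  classical
  obtain ⟨⟨hβΔ, d, hd⟩, -, c, hc⟩ := hβ
  rw [R.reflect_apply _ (R.sroot_mem i)] at hc
  set k := 2 * ⟪R.sroot i, β⟫ / ⟪R.sroot i, R.sroot i⟫
  have hsum : ∑ j, ((d j : ℝ) + c j) • R.sroot j =
      ∑ j, (Pi.single i k : ι → ℝ) j • R.sroot j := by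
    simp only [add_smul, Finset.sum_add_distrib, ← hd, ← hc, Pi.single_apply, ite_smul,
      zero_smul, Finset.sum_ite_eq', Finset.mem_univ, if_true]
    abel
  have hd_single : β = (d i : ℝ) • R.sroot i := by
    rw [hd, Fintype.sum_eq_single i fun j hj => ?_]
    simp [R.coeff_eq_zero_of_sum_add_eq_sum hsum (j := j) (by simp [hj])]
  refine ⟨d i, fun h0 => R.ne_zero_of_mem hβΔ ?_, hd_single⟩
  rw [hd_single, h0, zero_smul]

def word (l : List ι) : V ≃ₗ[ℝ] V := (l.map fun i => R.reflect (R.sroot i)).prod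

@[simp] lemma word_nil : R.word [] = 1 := rfl

@[simp] lemma word_cons (i : ι) (l : List ι) :
    R.word (i :: l) = R.reflect (R.sroot i) * R.word l := rfl

lemma word_append (l l' : List ι) : R.word (l ++ l') = R.word l * R.word l' := by
  simp [word]

lemma word_mem_W (l : List ι) : R.word l ∈ R.W := by
  induction l with
  | nil => exact one_mem _
  | cons i l ih => exact mul_mem (Subgroup.subset_closure ⟨i, rfl⟩) ih

lemma word_apply_mem (l : List ι) {a : V} (ha : a ∈ R.Δ) : R.word l a ∈ R.Δ := by
  induction l with
  | nil => exact ha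
  | cons i l ih => exact R.reflect_root_mem _ (R.sroot_mem i) _ ih

lemma inner_word_word (l : List ι) (x y : V) : ⟪R.word l x, R.word l y⟫ = ⟪x, y⟫ := by
  induction l with
  | nil => rfl
  | cons i l ih =>
    simp only [word_cons, LinearEquiv.mul_apply, R.inner_reflect_reflect (R.sroot_mem i), ih]

lemma exists_word_of_mem_W {w : V ≃ₗ[ℝ] V} (hw : w ∈ R.W) : ∃ l, R.word l = w := by
  induction hw using Subgroup.closure_induction'' with
  | mem _ hx =>
    obtain ⟨i, rfl⟩ := hx
    exact ⟨[i], mul_one _⟩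
  | inv_mem _ hx =>
    obtain ⟨i, rfl⟩ := hx
    refine ⟨[i], ?_⟩
    rw [word_cons, word_nil, mul_one, eq_inv_iff_mul_eq_one, R.reflect_mul_self (R.sroot_mem i)]
  | one => exact ⟨[], rfl⟩
  | mul _ _ _ _ hx hy =>
    obtain ⟨l, rfl⟩ := hx
    obtain ⟨l', rfl⟩ := hy
    exact ⟨l ++ l', R.word_append l l'⟩

lemma exists_word_length_eq_len {w : V ≃ₗ[ℝ] V} (hw : w ∈ R.W) :
    ∃ l : List ι, l.length = R.len w ∧ R.word l = w := by
  obtain ⟨l, hl⟩ := R.exists_word_of_mem_W hw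
  exact Nat.sInf_mem (s := {n | ∃ l : List ι, l.length = n ∧ R.word l = w})
    ⟨l.length, l, rfl, hl⟩

lemma len_le_length (l : List ι) : R.len (R.word l) ≤ l.length :=
  Nat.sInf_le ⟨l, rfl, rfl⟩

/-- Strong exchange condition. If `w = s_i u` inverts `γ`, either `u` already does (induction),
or `u γ` is a multiple of `α_i`, whence `s_i = u s_γ u⁻¹` and `w s_γ = u`. -/
lemma exists_word_mul_reflect (l : List ι) {γ : V} (hγ : γ ∈ R.N (R.word l)) :
    ∃ l' : List ι, l'.length + 1 = l.length ∧ R.word l' = R.word l * R.reflect γ := by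
  induction l with
  | nil => exact absurd hγ.2 (R.neg_notMem_pos_s12 hγ.1)
  | cons i t ih =>
    obtain ⟨hγp, hγn⟩ := hγ
    have huγ : R.word t γ ∈ R.Δ := R.word_apply_mem t hγp.1
    rcases R.decomp _ huγ with hpos | ⟨c, hc⟩
    · obtain ⟨c, hc0, hc⟩ := R.eq_smul_sroot_of_mem_N_reflect ⟨⟨huγ, hpos⟩, hγn⟩
      have hconj : R.reflect (R.sroot i) = R.word t * R.reflect γ * (R.word t)⁻¹ := by
        rw [← R.reflect_smul (R.sroot_mem i) hc0 (hc ▸ huγ), ← hc,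
          R.reflect_conj (R.inner_word_word t) hγp.1 huγ]
      refine ⟨t, rfl, ?_⟩
      rw [word_cons, hconj, inv_mul_cancel_right, mul_assoc, R.reflect_mul_self hγp.1, mul_one]
    · obtain ⟨t', ht', hwt'⟩ := ih ⟨hγp, R.neg_mem _ huγ, c, by rw [hc, neg_neg]⟩
      exact ⟨i :: t', by simp [← ht'], by rw [word_cons, word_cons, hwt', mul_assoc]⟩

lemma mul_reflect_mem_W {w : V ≃ₗ[ℝ] V} (hw : w ∈ R.W) {γ : V} (hγ : γ ∈ R.N w) :
    w * R.reflect γ ∈ R.W := by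
  obtain ⟨l, rfl⟩ := R.exists_word_of_mem_W hw
  obtain ⟨l', -, hl'⟩ := R.exists_word_mul_reflect l hγ
  exact hl' ▸ R.word_mem_W l'

lemma len_mul_reflect_lt {w : V ≃ₗ[ℝ] V} (hw : w ∈ R.W) {γ : V} (hγ : γ ∈ R.N w) :
    R.len (w * R.reflect γ) < R.len w := by
  obtain ⟨l, hl, rfl⟩ := R.exists_word_length_eq_len hw
  obtain ⟨l', hl', hwl'⟩ := R.exists_word_mul_reflect l hγ
  have := R.len_le_length l'
  rw [hwl'] at this
  omega

end RSD

theorem inversion_set_of_w_theta_mu_subset_general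
    {ι V : Type*} [Fintype ι] [NormedAddCommGroup V] [InnerProductSpace ℝ V]
    (R : RSD ι V) (θ μ : V) (hμ : μ ∈ R.pos)
    (w : V ≃ₗ[ℝ] V) (hw : w ∈ R.W) (hwθ : w θ = μ)
    (hmin : ∀ w' ∈ R.W, w' θ = μ → R.len w ≤ R.len w') :
    R.N w ⊆ {γ ∈ R.pos | ⟪γ, θ⟫ ≠ 0} \ {θ} := by
  intro γ hγ
  refine ⟨⟨hγ.1, fun hγθ => ?_⟩, ?_⟩
  · have hfix : (w * R.reflect γ) θ = μ := by
      rw [LinearEquiv.mul_apply, R.reflect_apply_eq_self hγ.1.1 hγθ, hwθ]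
    exact (hmin _ (R.mul_reflect_mem_W hw hγ) hfix).not_gt (R.len_mul_reflect_lt hw hγ)
  · rintro rfl
    exact R.neg_notMem_pos_s12 hμ (hwθ ▸ hγ.2)

/-- For a long positive root `μ`, the inversion set of the
minimal-length element taking `θ` to `μ` is contained in `H ∖ {θ}`,
where `H = {γ ∈ Δ⁺ ∣ (γ,θ) ≠ 0}`. -/
theorem inversion_set_of_w_theta_mu_subset
    {ι V : Type*} [Fintype ι] [NormedAddCommGroup V] [InnerProductSpace ℝ V]
    (R : RSD ι V) (θ μ : V) (hθ : R.IsHighest θ) (hμl : R.IsLong μ) (hμ : μ ∈ R.pos)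
    (w : V ≃ₗ[ℝ] V) (hw : w ∈ R.W) (hwθ : w θ = μ)
    (hmin : ∀ w' ∈ R.W, w' θ = μ → R.len w ≤ R.len w') :
    R.N w ⊆ {γ ∈ R.pos | ⟪γ, θ⟫ ≠ 0} \ {θ} :=
  inversion_set_of_w_theta_mu_subset_general R θ μ hμ w hw hwθ hmin
end
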